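/- Let T₀ be the backward weighted shift on A^{(λ₀)}(𝔻) with weights w_n^{(λ₀)} = √((n+1)/(n+λ₀)) and S₀₁: A^{(λ₁)}(𝔻) → A^{(λ₀)}(𝔻) the diagonal operator S₀₁ f_n = s_n e_n with s_n = √(a_n(λ₀)/a_n(λ₁)), where λ₁ - λ₀ < 2. Then ‖n T₀^{n-1} S₀₁‖ → ∞ as n → ∞; in particular the 2×2 operator [[T₀, S₀₁],[0, T₁]] is not power bounded. -/

import Mathlib

open Filter Topology

/-- The Taylor coefficient `a_n(λ) = (λ)_n / n!` of `(1 - x)^{-λ}`. -/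
noncomputable def bergmanCoeff (lam : ℝ) (n : ℕ) : ℝ :=
  (ascPochhammer ℝ n).eval lam / n.factorial

/-!
Since `a_{n+1}(λ) = a_n(λ) (λ + n) / (n + 1)`, the diagonal operator `S₀₁` intertwines the two
weighted shifts, `T₀ S₀₁ = S₀₁ T₁`, so the upper-right entry of `T^n` is `n T₀^{n-1} S₀₁`.
Testing `T₀^m S₀₁` on `f_{2m}` gives `‖T₀^m S₀₁‖ ≥ √(a_m(λ₀) / a_{2m}(λ₁))`, and Euler's limit
formula `a_k(λ) ~ k^{λ-1} / Γ(λ)` makes `(m+1)² a_m(λ₀) / a_{2m}(λ₁)` grow like `m^{2+λ₀-λ₁}`,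
which tends to infinity because `λ₁ - λ₀ < 2`.
-/

lemma ascPochhammer_eval_eq_prod_range {R : Type*} [CommSemiring R] (r : R) (n : ℕ) :
    (ascPochhammer R n).eval r = ∏ j ∈ Finset.range n, (r + j) := by
  induction n with
  | zero => simp
  | succ n ih =>
    rw [ascPochhammer_succ_right, Polynomial.eval_mul, ih, Finset.prod_range_succ]
    simp [mul_comm]

lemma bergmanCoeff_pos {lam : ℝ} (h : 0 < lam) (n : ℕ) : 0 < bergmanCoeff lam n := by
  rw [bergmanCoeff, ascPochhammer_eval_eq_prod_range]
  exact div_pos (Finset.prod_pos fun j _ => by positivity) (mod_cast n.factorial_pos)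

lemma bergmanCoeff_succ (lam : ℝ) (n : ℕ) :
    bergmanCoeff lam (n + 1) = bergmanCoeff lam n * ((lam + n) / (n + 1)) := by
  rw [bergmanCoeff, bergmanCoeff, ascPochhammer_eval_eq_prod_range,
    ascPochhammer_eval_eq_prod_range, Finset.prod_range_succ, Nat.factorial_succ]
  push_cast
  field_simp

lemma bergmanCoeff_add_mul_prod_Ico {lam : ℝ} (h : 0 < lam) (k m : ℕ) :
    bergmanCoeff lam (k + m) * ∏ j ∈ Finset.Ico k (k + m), (((j : ℝ) + 1) / ((j : ℝ) + lam)) =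
      bergmanCoeff lam k := by
  induction m with
  | zero => simp
  | succ m ih =>
    rw [← add_assoc, bergmanCoeff_succ, Finset.prod_Ico_succ_top (Nat.le_add_right k m), ← ih]
    have : (lam + (k + m : ℕ)) ≠ 0 := by positivity
    field_simp
    ring

lemma GammaSeq_mul_bergmanCoeff {lam : ℝ} (h : 0 < lam) (n : ℕ) :
    Real.GammaSeq lam n * (lam + n) * bergmanCoeff lam n = (n : ℝ) ^ lam := by
  have : (∏ j ∈ Finset.range n, (lam + (j : ℝ))) ≠ 0 :=
    (Finset.prod_pos fun j _ => by positivity).ne'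
  rw [Real.GammaSeq, bergmanCoeff, ascPochhammer_eval_eq_prod_range, Finset.prod_range_succ]
  field_simp

lemma tendsto_bergmanCoeff_mul_rpow {lam : ℝ} (h : 0 < lam) :
    Tendsto (fun n : ℕ => bergmanCoeff lam n * (n : ℝ) ^ (1 - lam)) atTop
      (𝓝 (Real.Gamma lam)⁻¹) := by
  have hlim := (tendsto_natCast_div_add_atTop lam).div (Real.GammaSeq_tendsto_Gamma lam)
    (Real.Gamma_pos_of_pos h).ne'
  rw [one_div] at hlim
  refine hlim.congr' ?_
  filter_upwards [eventually_ge_atTop 1] with n hn1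
  have hn : (0 : ℝ) < n := by exact_mod_cast hn1
  have hid := GammaSeq_mul_bergmanCoeff h n
  have hG : Real.GammaSeq lam n ≠ 0 := by
    rintro hG
    rw [hG, zero_mul, zero_mul] at hid
    exact (Real.rpow_pos_of_pos hn lam).ne hid
  have hsplit : (n : ℝ) = (n : ℝ) ^ lam * (n : ℝ) ^ (1 - lam) := by
    rw [← Real.rpow_add hn, add_sub_cancel, Real.rpow_one]
  rw [Pi.div_apply, div_div, div_eq_iff (by positivity)]
  conv_lhs => rw [hsplit, ← hid]
  ring

lemma sqrt_bergmanCoeff_div_succ_mul_sqrt {lam₀ lam₁ : ℝ} (h0 : 0 < lam₀) (h1 : 0 < lam₁)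
    (n : ℕ) :
    √(bergmanCoeff lam₀ (n + 1) / bergmanCoeff lam₁ (n + 1)) * √(((n : ℝ) + 1) / ((n : ℝ) + lam₀))
      = √(((n : ℝ) + 1) / ((n : ℝ) + lam₁)) * √(bergmanCoeff lam₀ n / bergmanCoeff lam₁ n) := by
  have := bergmanCoeff_pos h0 n
  have := bergmanCoeff_pos h1 n
  rw [← Real.sqrt_mul' _ (by positivity), ← Real.sqrt_mul' _ (by positivity),
    bergmanCoeff_succ, bergmanCoeff_succ]
  congr 1
  field_simp
  ring

lemma tendsto_rpow_mul_succ_sq_atTop {a : ℝ} (ha : -2 < a) :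
    Tendsto (fun m : ℕ => ((m : ℝ) + 1) ^ 2 * (m : ℝ) ^ a) atTop atTop := by
  refine tendsto_atTop_mono (fun m => ?_)
    ((tendsto_rpow_atTop (by linarith : (0 : ℝ) < 2 + a)).comp tendsto_natCast_atTop_atTop)
  rcases (m.cast_nonneg : (0 : ℝ) ≤ m).eq_or_lt with hm | hm
  · rw [Function.comp_apply, ← hm, Real.zero_rpow (by linarith)]
    positivity
  · rw [Function.comp_apply, Real.rpow_add hm, Real.rpow_two]
    gcongr
    linarith

lemma tendsto_succ_sq_mul_bergmanCoeff_div {lam₀ lam₁ : ℝ} (h0 : 0 < lam₀) (h1 : 0 < lam₁)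
    (hgap : lam₁ - lam₀ < 2) :
    Tendsto (fun m : ℕ => ((m : ℝ) + 1) ^ 2 * (bergmanCoeff lam₀ m / bergmanCoeff lam₁ (m + m)))
      atTop atTop := by
  have hdouble : Tendsto (fun m : ℕ => m + m) atTop atTop :=
    tendsto_atTop_mono (fun m => Nat.le_add_left m m) tendsto_id
  have hratio := (tendsto_bergmanCoeff_mul_rpow h0).div
    ((tendsto_bergmanCoeff_mul_rpow h1).comp hdouble) (inv_ne_zero (Real.Gamma_pos_of_pos h1).ne')
  have hpow := (tendsto_rpow_mul_succ_sq_atTop (a := lam₀ - lam₁) (by linarith)).const_mul_atTop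
    (Real.rpow_pos_of_pos two_pos (1 - lam₁))
  have hΓ₀ := Real.Gamma_pos_of_pos h0
  have hΓ₁ := Real.Gamma_pos_of_pos h1
  -- `(m+1)² a_m(λ₀) / a_{2m}(λ₁)`
  --   `= a_m(λ₀) m^{1-λ₀} / (a_{2m}(λ₁) (2m)^{1-λ₁}) · 2^{1-λ₁} (m+1)² m^{λ₀-λ₁}`
  refine (hratio.pos_mul_atTop (by positivity) hpow).congr' ?_
  filter_upwards [eventually_ge_atTop 1] with m hm1
  have hm : (0 : ℝ) < m := by exact_mod_cast hm1
  have hcast : (((m + m : ℕ) : ℝ)) ^ (1 - lam₁) = 2 ^ (1 - lam₁) * (m : ℝ) ^ (1 - lam₁) := by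
    rw [Nat.cast_add, ← two_mul, Real.mul_rpow zero_le_two hm.le]
  have hexp : (m : ℝ) ^ (1 - lam₀) * (m : ℝ) ^ (lam₀ - lam₁) = (m : ℝ) ^ (1 - lam₁) := by
    rw [← Real.rpow_add hm]; ring_nf
  simp only [Pi.div_apply, Function.comp_apply]
  rw [hcast, ← hexp]
  field_simp

lemma tendsto_succ_mul_sqrt_bergmanCoeff_div {lam₀ lam₁ : ℝ} (h0 : 0 < lam₀) (h1 : 0 < lam₁)
    (hgap : lam₁ - lam₀ < 2) :
    Tendsto (fun m : ℕ => ((m : ℝ) + 1) * √(bergmanCoeff lam₀ m / bergmanCoeff lam₁ (m + m)))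
      atTop atTop := by
  refine (Real.tendsto_sqrt_atTop.comp (tendsto_succ_sq_mul_bergmanCoeff_div h0 h1 hgap)).congr
    fun m => ?_
  rw [Function.comp_apply, Real.sqrt_mul (sq_nonneg _), Real.sqrt_sq (by positivity)]

theorem pow_apply_add_of_apply_succ {𝕜 E : Type*} [CommSemiring 𝕜] [AddCommMonoid E]
    [Module 𝕜 E] [TopologicalSpace E] {T : E →L[𝕜] E} {e : ℕ → E} {w : ℕ → 𝕜}
    (hT : ∀ n, T (e (n + 1)) = w n • e n) (k m : ℕ) :
    (T ^ m) (e (k + m)) = (∏ j ∈ Finset.Ico k (k + m), w j) • e k := by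
  induction m with
  | zero => simp
  | succ m ih =>
    rw [pow_succ, mul_apply_eq_comp, ← add_assoc, hT, map_smul, ih,
      Finset.prod_Ico_succ_top (Nat.le_add_right k m), smul_smul, mul_comm]

theorem comp_eq_comp_of_weighted_shifts {𝕜 E F : Type*} [CommSemiring 𝕜]
    [AddCommMonoid E] [Module 𝕜 E] [TopologicalSpace E] [T2Space E]
    [AddCommMonoid F] [Module 𝕜 F] [TopologicalSpace F]
    {A : E →L[𝕜] E} {B : F →L[𝕜] E} {D : F →L[𝕜] F} {e : ℕ → E} {f : ℕ → F}
    {a d s : ℕ → 𝕜} (hf : Dense (Submodule.span 𝕜 (Set.range f) : Set F))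
    (hA₀ : A (e 0) = 0) (hA : ∀ n, A (e (n + 1)) = a n • e n)
    (hD₀ : D (f 0) = 0) (hD : ∀ n, D (f (n + 1)) = d n • f n)
    (hB : ∀ n, B (f n) = s n • e n) (hw : ∀ n, s (n + 1) * a n = d n * s n) :
    A ∘L B = B ∘L D := by
  refine ContinuousLinearMap.ext_on hf ?_
  rintro _ ⟨n, rfl⟩
  cases n with
  | zero => simp [hB, hA₀, hD₀]
  | succ n => simp [hB, hA, hD, smul_smul, hw]

theorem pow_comp_eq_comp_pow {𝕜 E F : Type*} [Semiring 𝕜] [AddCommMonoid E] [Module 𝕜 E]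
    [TopologicalSpace E] [AddCommMonoid F] [Module 𝕜 F] [TopologicalSpace F]
    {A : E →L[𝕜] E} {B : F →L[𝕜] E} {D : F →L[𝕜] F} (hAB : A ∘L B = B ∘L D) (m : ℕ) :
    (A ^ m) ∘L B = B ∘L (D ^ m) := by
  induction m with
  | zero => rfl
  | succ m ih =>
    rw [pow_succ, pow_succ, ContinuousLinearMap.mul_def, ContinuousLinearMap.mul_def,
      ContinuousLinearMap.comp_assoc, hAB, ← ContinuousLinearMap.comp_assoc, ih,
      ContinuousLinearMap.comp_assoc]

theorem upperTriangular_pow_succ_apply {𝕜 E F : Type*} [Semiring 𝕜] [AddCommMonoid E]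
    [Module 𝕜 E] [TopologicalSpace E] [AddCommMonoid F] [Module 𝕜 F]
    [TopologicalSpace F] {A : E →L[𝕜] E} {B : F →L[𝕜] E} {D : F →L[𝕜] F}
    {T : (E × F) →L[𝕜] (E × F)} (hT : ∀ x y, T (x, y) = (A x + B y, D y))
    (hAB : A ∘L B = B ∘L D) (m : ℕ) (y : F) :
    (T ^ (m + 1)) (0, y) = ((m + 1) • (A ^ m) (B y), (D ^ (m + 1)) y) := by
  induction m with
  | zero => simp [hT]
  | succ m ih =>
    have hBD : B ((D ^ (m + 1)) y) = (A ^ (m + 1)) (B y) := by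
      rw [← ContinuousLinearMap.comp_apply, ← pow_comp_eq_comp_pow hAB]; rfl
    rw [pow_succ', mul_apply_eq_comp, ih, hT, map_nsmul, hBD, ← mul_apply_eq_comp A, ← pow_succ',
      ← mul_apply_eq_comp D, ← pow_succ', ← succ_nsmul]

section UpperTriangular

variable {𝕜 E F : Type*} [RCLike 𝕜] [NormedAddCommGroup E] [NormedSpace 𝕜 E]
  [NormedAddCommGroup F] [NormedSpace 𝕜 F]
  {A : E →L[𝕜] E} {B : F →L[𝕜] E} {D : F →L[𝕜] F} {T : (E × F) →L[𝕜] (E × F)}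

theorem succ_mul_norm_pow_comp_le (hT : ∀ x y, T (x, y) = (A x + B y, D y))
    (hAB : A ∘L B = B ∘L D) (m : ℕ) : ((m : ℝ) + 1) * ‖(A ^ m) ∘L B‖ ≤ ‖T ^ (m + 1)‖ := by
  have hnorm : ((m : ℝ) + 1) * ‖(A ^ m) ∘L B‖ = ‖(m + 1) • ((A ^ m) ∘L B)‖ := by
    rw [RCLike.norm_nsmul 𝕜, nsmul_eq_mul]; push_cast; rfl
  rw [hnorm]
  refine ContinuousLinearMap.opNorm_le_bound _ (norm_nonneg _) fun y => ?_
  calc ‖((m + 1) • ((A ^ m) ∘L B)) y‖ ≤ ‖(T ^ (m + 1)) (0, y)‖ := by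
        rw [upperTriangular_pow_succ_apply hT hAB]; exact norm_fst_le ((m + 1) • (A ^ m) (B y), _)
    _ ≤ ‖T ^ (m + 1)‖ * ‖((0 : E), y)‖ := (T ^ (m + 1)).le_opNorm _
    _ = ‖T ^ (m + 1)‖ * ‖y‖ := by rw [Prod.norm_mk, norm_zero, max_eq_right (norm_nonneg y)]

theorem natCast_mul_norm_pow_pred_comp_le (hT : ∀ x y, T (x, y) = (A x + B y, D y))
    (hAB : A ∘L B = B ∘L D) (n : ℕ) : (n : ℝ) * ‖(A ^ (n - 1)) ∘L B‖ ≤ ‖T ^ n‖ := by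
  cases n with
  | zero => simp
  | succ m => exact_mod_cast succ_mul_norm_pow_comp_le hT hAB m

end UpperTriangular

lemma bergmanShift_pow_comp_diag_apply {H₀ H₁ : Type*} [AddCommMonoid H₀] [Module ℂ H₀]
    [TopologicalSpace H₀] [AddCommMonoid H₁] [Module ℂ H₁] [TopologicalSpace H₁]
    {lam₀ lam₁ : ℝ} (h0 : 0 < lam₀) {e : ℕ → H₀} {f : ℕ → H₁}
    {T₀ : H₀ →L[ℂ] H₀} {S₀₁ : H₁ →L[ℂ] H₀}
    (hT₀ : ∀ n : ℕ, T₀ (e (n + 1)) =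
      ((Real.sqrt (((n : ℝ) + 1) / ((n : ℝ) + lam₀)) : ℝ) : ℂ) • e n)
    (hS : ∀ n : ℕ, S₀₁ (f n) =
      ((Real.sqrt (bergmanCoeff lam₀ n / bergmanCoeff lam₁ n) : ℝ) : ℂ) • e n) (m : ℕ) :
    ((T₀ ^ m) ∘L S₀₁) (f (m + m)) =
      ((√(bergmanCoeff lam₀ m / bergmanCoeff lam₁ (m + m)) : ℝ) : ℂ) • e m := by
  have hr : ∀ j : ℕ, 0 ≤ ((j : ℝ) + 1) / ((j : ℝ) + lam₀) := fun j => by positivity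
  rw [ContinuousLinearMap.comp_apply, hS, map_smul, pow_apply_add_of_apply_succ hT₀, smul_smul,
    ← Complex.ofReal_prod, ← Complex.ofReal_mul, ← Real.sqrt_prod _ fun j _ => hr j,
    ← Real.sqrt_mul' _ (Finset.prod_nonneg fun j _ => hr j), div_mul_eq_mul_div,
    bergmanCoeff_add_mul_prod_Ico h0]

theorem stmt_16_general {H₀ H₁ : Type*}
    [NormedAddCommGroup H₀] [InnerProductSpace ℂ H₀]
    [NormedAddCommGroup H₁] [InnerProductSpace ℂ H₁]
    (lam₀ lam₁ : ℝ) (h0 : 0 < lam₀) (h01 : lam₀ < lam₁) (hgap : lam₁ - lam₀ < 2)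
    (e : ℕ → H₀) (f : ℕ → H₁) (he : Orthonormal ℂ e) (hf : Orthonormal ℂ f)
    (htf : (Submodule.span ℂ (Set.range f)).topologicalClosure = ⊤)
    (T₀ : H₀ →L[ℂ] H₀) (T₁ : H₁ →L[ℂ] H₁) (S₀₁ : H₁ →L[ℂ] H₀)
    (hT₀z : T₀ (e 0) = 0)
    (hT₀ : ∀ n : ℕ, T₀ (e (n + 1)) =
      ((Real.sqrt (((n : ℝ) + 1) / ((n : ℝ) + lam₀)) : ℝ) : ℂ) • e n)
    (hT₁z : T₁ (f 0) = 0)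
    (hT₁ : ∀ n : ℕ, T₁ (f (n + 1)) =
      ((Real.sqrt (((n : ℝ) + 1) / ((n : ℝ) + lam₁)) : ℝ) : ℂ) • f n)
    (hS : ∀ n : ℕ, S₀₁ (f n) =
      ((Real.sqrt (bergmanCoeff lam₀ n / bergmanCoeff lam₁ n) : ℝ) : ℂ) • e n)
    (T : (H₀ × H₁) →L[ℂ] (H₀ × H₁))
    (hT : ∀ (x : H₀) (y : H₁), T (x, y) = (T₀ x + S₀₁ y, T₁ y)) :
    Tendsto (fun n : ℕ => (n : ℝ) * ‖(T₀ ^ (n - 1)) ∘L S₀₁‖) atTop atTop ∧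
    ¬ ∃ C : ℝ, ∀ n : ℕ, ‖T ^ n‖ ≤ C := by
  have h1 : 0 < lam₁ := h0.trans h01
  have hcomm : T₀ ∘L S₀₁ = S₀₁ ∘L T₁ :=
    comp_eq_comp_of_weighted_shifts (Submodule.dense_iff_topologicalClosure_eq_top.mpr htf)
      hT₀z hT₀ hT₁z hT₁ hS fun n => by
        rw [← Complex.ofReal_mul, ← Complex.ofReal_mul, sqrt_bergmanCoeff_div_succ_mul_sqrt h0 h1]
  have hlower (m : ℕ) :
      √(bergmanCoeff lam₀ m / bergmanCoeff lam₁ (m + m)) ≤ ‖(T₀ ^ m) ∘L S₀₁‖ := by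
    simpa [bergmanShift_pow_comp_diag_apply h0 hT₀ hS, he.1, hf.1, norm_smul, abs_of_nonneg] using
      ((T₀ ^ m) ∘L S₀₁).le_opNorm (f (m + m))
  have hgrowth : Tendsto (fun n : ℕ => (n : ℝ) * ‖(T₀ ^ (n - 1)) ∘L S₀₁‖) atTop atTop := by
    rw [← tendsto_add_atTop_iff_nat 1]
    refine tendsto_atTop_mono (fun m => ?_) (tendsto_succ_mul_sqrt_bergmanCoeff_div h0 h1 hgap)
    rw [Nat.cast_succ, Nat.add_sub_cancel]
    gcongr
    exact hlower m
  refine ⟨hgrowth, fun ⟨C, hC⟩ => ?_⟩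
  obtain ⟨n, hn⟩ := ((tendsto_atTop_mono (natCast_mul_norm_pow_pred_comp_le hT hcomm)
    hgrowth).eventually_gt_atTop C).exists
  exact (hC n).not_gt hn

/-- Let `T₀` be the backward weighted Bergman shift with weights `√((n+1)/(n+λ₀))`
and `S₀₁` the diagonal intertwiner with weights `√(a_n(λ₀)/a_n(λ₁))`, `λ₁ - λ₀ < 2`.
Then `‖n T₀^{n-1} S₀₁‖ → ∞`; in particular `T = [[T₀, S₀₁],[0, T₁]]` is not
power bounded. -/
theorem stmt_16 {H₀ H₁ : Type*}
    [NormedAddCommGroup H₀] [InnerProductSpace ℂ H₀] [CompleteSpace H₀]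
    [NormedAddCommGroup H₁] [InnerProductSpace ℂ H₁] [CompleteSpace H₁]
    (lam₀ lam₁ : ℝ) (h0 : 0 < lam₀) (h01 : lam₀ < lam₁) (hgap : lam₁ - lam₀ < 2)
    (e : ℕ → H₀) (f : ℕ → H₁) (he : Orthonormal ℂ e) (hf : Orthonormal ℂ f)
    (hte : (Submodule.span ℂ (Set.range e)).topologicalClosure = ⊤)
    (htf : (Submodule.span ℂ (Set.range f)).topologicalClosure = ⊤)
    (T₀ : H₀ →L[ℂ] H₀) (T₁ : H₁ →L[ℂ] H₁) (S₀₁ : H₁ →L[ℂ] H₀)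
    (hT₀z : T₀ (e 0) = 0)
    (hT₀ : ∀ n : ℕ, T₀ (e (n + 1)) =
      ((Real.sqrt (((n : ℝ) + 1) / ((n : ℝ) + lam₀)) : ℝ) : ℂ) • e n)
    (hT₁z : T₁ (f 0) = 0)
    (hT₁ : ∀ n : ℕ, T₁ (f (n + 1)) =
      ((Real.sqrt (((n : ℝ) + 1) / ((n : ℝ) + lam₁)) : ℝ) : ℂ) • f n)
    (hS : ∀ n : ℕ, S₀₁ (f n) =
      ((Real.sqrt (bergmanCoeff lam₀ n / bergmanCoeff lam₁ n) : ℝ) : ℂ) • e n)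
    (T : (H₀ × H₁) →L[ℂ] (H₀ × H₁))
    (hT : ∀ (x : H₀) (y : H₁), T (x, y) = (T₀ x + S₀₁ y, T₁ y)) :
    Tendsto (fun n : ℕ => (n : ℝ) * ‖(T₀ ^ (n - 1)) ∘L S₀₁‖) atTop atTop ∧
    ¬ ∃ C : ℝ, ∀ n : ℕ, ‖T ^ n‖ ≤ C :=
  stmt_16_general lam₀ lam₁ h0 h01 hgap e f he hf htf T₀ T₁ S₀₁ hT₀z hT₀ hT₁z hT₁ hS T hT
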